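/- arXiv:2303.11417 — 2 statements merged into one kernel-verified Lean document; each statement's English description precedes it below -/
import Mathlib

section
/- Let C_q be a diagonal n×n real matrix with positive diagonal entries, X a symmetric positive definite n×n real matrix, and let A = C_q X^{−1} + I. Let K(v) be, for each v ∈ ℝ^n, a diagonal matrix with nonpositive diagonal entries whose operator norm satisfies 2‖K(v)‖ ≤ σ_min(A). Suppose π(v) = −K(v)(v − v*) and ∇F(q) = A(v − v*) where v = Xq + v_env. Then for all v, ‖∇F(q)‖² + 2⟨π(v), −∇F(q)⟩ ≥ 0. -/
/-!
Writing `y = v - v*`, the quantity is `‖Ay‖² + 2⟪Ky, Ay⟫`. By Cauchy–Schwarz and the operator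
bound `‖Ky‖ ≤ ‖K‖ ‖y‖`, it is at least `‖Ay‖ (‖Ay‖ - 2‖K‖ ‖y‖)`, which is nonnegative because
`2‖K‖ ‖y‖ ≤ σ_min(A) ‖y‖ ≤ ‖Ay‖`.
-/

open Matrix WithLp

theorem norm_sq_add_two_inner_nonneg_of_two_mul_norm_le {E : Type*} [NormedAddCommGroup E]
    [InnerProductSpace ℝ E] {a b : E} (h : 2 * ‖b‖ ≤ ‖a‖) :
    0 ≤ ‖a‖ ^ 2 + 2 * inner ℝ b a := by
  have hinner : -(‖b‖ * ‖a‖) ≤ inner ℝ b a := neg_le_of_abs_le (abs_real_inner_le_norm b a)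
  nlinarith [norm_nonneg a]

theorem Matrix.sum_sq_mulVec_add_two_dotProduct_mulVec_nonneg {ι : Type*} [Fintype ι]
    [DecidableEq ι] (A K : Matrix ι ι ℝ) (y : ι → ℝ)
    (h : 2 * ‖toEuclideanCLM (𝕜 := ℝ) K‖ * ‖toLp 2 y‖ ≤
      ‖toEuclideanCLM (𝕜 := ℝ) A (toLp 2 y)‖) :
    0 ≤ ∑ i, (A *ᵥ y) i ^ 2 + 2 * ((K *ᵥ y) ⬝ᵥ (A *ᵥ y)) := by
  have hK : ‖toLp 2 (K *ᵥ y)‖ ≤ ‖toEuclideanCLM (𝕜 := ℝ) K‖ * ‖toLp 2 y‖ :=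
    (toEuclideanCLM (𝕜 := ℝ) K).le_opNorm (toLp 2 y)
  rw [toEuclideanCLM_toLp] at h
  have key := norm_sq_add_two_inner_nonneg_of_two_mul_norm_le
    (a := toLp 2 (A *ᵥ y)) (b := toLp 2 (K *ᵥ y)) (by linarith)
  rwa [EuclideanSpace.real_norm_sq_eq, EuclideanSpace.inner_toLp_toLp, star_trivial,
    dotProduct_comm] at key

open Matrix in
theorem stmt_5_general {n : ℕ}
    (X : Matrix (Fin n) (Fin n) ℝ)
    (venv vstar : Fin n → ℝ)
    (k : (Fin n → ℝ) → Fin n → ℝ)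
    (A : Matrix (Fin n) (Fin n) ℝ)
    -- `2σ_max(K(v)) ≤ σ_min(A)`, stated as `2‖K(v)x‖... ` via operator bound:
    (hKA : ∀ v : Fin n → ℝ, ∀ x : EuclideanSpace ℝ (Fin n),
      2 * ‖Matrix.toEuclideanCLM (𝕜 := ℝ) (Matrix.diagonal (k v))‖ * ‖x‖ ≤
        ‖Matrix.toEuclideanCLM (𝕜 := ℝ) A x‖)
    (π gradF : (Fin n → ℝ) → Fin n → ℝ)
    (hπ : ∀ v, π v = -(Matrix.diagonal (k v)).mulVec (v - vstar))
    (hgrad : ∀ q, gradF q = A.mulVec (X.mulVec q + venv - vstar)) :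
    ∀ q : Fin n → ℝ,
      0 ≤ (∑ i, (gradF q i) ^ 2) +
            2 * (π (X.mulVec q + venv) ⬝ᵥ (-(gradF q))) := by
  intro q
  rw [hgrad, hπ, neg_dotProduct_neg]
  exact sum_sq_mulVec_add_two_dotProduct_mulVec_nonneg _ _ _ (hKA _ _)

open Matrix in
/-- Lemma 1 of the paper: with `A = C_q X⁻¹ + I`, `π(v) = −K(v)(v − v*)` and
`∇F(q) = A(v − v*)` for `v = Xq + v_env`, if each `K(v)` is diagonal with
nonpositive entries and `2σ_max(K(v)) ≤ σ_min(A)`, then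
`‖∇F(q)‖² + 2⟨π(v), −∇F(q)⟩ ≥ 0`. -/
theorem stmt_5 {n : ℕ} (d : Fin n → ℝ) (hd : ∀ i, 0 < d i)
    (X : Matrix (Fin n) (Fin n) ℝ) (hX : X.PosDef)
    (venv vstar : Fin n → ℝ)
    (k : (Fin n → ℝ) → Fin n → ℝ) (hk : ∀ v i, k v i ≤ 0)
    (A : Matrix (Fin n) (Fin n) ℝ)
    (hA : A = Matrix.diagonal d * X⁻¹ + 1)
    -- `2σ_max(K(v)) ≤ σ_min(A)`, stated as `2‖K(v)x‖... ` via operator bound: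
    (hKA : ∀ v : Fin n → ℝ, ∀ x : EuclideanSpace ℝ (Fin n),
      2 * ‖Matrix.toEuclideanCLM (𝕜 := ℝ) (Matrix.diagonal (k v))‖ * ‖x‖ ≤
        ‖Matrix.toEuclideanCLM (𝕜 := ℝ) A x‖)
    (π gradF : (Fin n → ℝ) → Fin n → ℝ)
    (hπ : ∀ v, π v = -(Matrix.diagonal (k v)).mulVec (v - vstar))
    (hgrad : ∀ q, gradF q = A.mulVec (X.mulVec q + venv - vstar)) :
    ∀ q : Fin n → ℝ,
      0 ≤ (∑ i, (gradF q i) ^ 2) +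
            2 * (π (X.mulVec q + venv) ⬝ᵥ (-(gradF q))) :=
  stmt_5_general X venv vstar k A hKA π gradF hπ hgrad
end

section
/- Let f, π ∈ ℝ^n and ω ∈ ℝ^m with ω ≥ 0 componentwise, G an m×n matrix, g ∈ ℝ^m with g ≤ 0 componentwise, and α > 0. Suppose f = −G^⊤ω − ∇F + π for some ∇F ∈ ℝ^n, ω^⊤(G f + α g) = 0, and ‖f‖ ≥ ‖π‖. Then f^⊤∇F ≤ 0. -/
open Matrix Finset

theorem dotProduct_le_sum_sq_of_sum_sq_le {ι : Type*} [Fintype ι] {v w : ι → ℝ}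
    (h : ∑ i, w i ^ 2 ≤ ∑ i, v i ^ 2) : v ⬝ᵥ w ≤ ∑ i, v i ^ 2 := by
  have hv : 0 ≤ ∑ i, v i ^ 2 := by positivity
  have hsq : (v ⬝ᵥ w) ^ 2 ≤ (∑ i, v i ^ 2) ^ 2 :=
    calc (v ⬝ᵥ w) ^ 2 ≤ (∑ i, v i ^ 2) * ∑ i, w i ^ 2 := sum_mul_sq_le_sq_mul_sq univ v w
      _ ≤ (∑ i, v i ^ 2) ^ 2 := by rw [sq]; gcongr
  exact (abs_le_of_sq_le_sq' hsq hv).2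

theorem dotProduct_transpose_mulVec_nonneg_of_slackness {m n : Type*} [Fintype m] [Fintype n]
    {G : Matrix m n ℝ} {f : n → ℝ} {ω g : m → ℝ} {α : ℝ} (hα : 0 ≤ α) (hω : 0 ≤ ω) (hg : g ≤ 0)
    (hcs : ω ⬝ᵥ (G *ᵥ f + α • g) = 0) : 0 ≤ f ⬝ᵥ Gᵀ *ᵥ ω := by
  have hωg : 0 ≤ ω ⬝ᵥ -g := dotProduct_nonneg_of_nonneg hω (neg_nonneg.2 hg)
  have hGf : ω ⬝ᵥ G *ᵥ f = α * (ω ⬝ᵥ -g) := by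
    rw [dotProduct_add, dotProduct_smul, smul_eq_mul] at hcs
    rw [dotProduct_neg]; linarith
  rw [dotProduct_mulVec, vecMul_transpose, dotProduct_comm, hGf]
  positivity

/-- Lyapunov descent step: from KKT stationarity, complementary slackness,
`ω ≥ 0`, `g ≤ 0`, `α > 0` and `‖f‖ ≥ ‖π‖`, conclude `f ⬝ ∇F ≤ 0`. -/
theorem stmt_6 {n m : ℕ} (f π gradF : Fin n → ℝ) (ω g : Fin m → ℝ)
    (G : Matrix (Fin m) (Fin n) ℝ) (α : ℝ) (hα : 0 < α)
    (hω : ∀ i, 0 ≤ ω i) (hg : ∀ i, g i ≤ 0)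
    (hstat : f = -(Gᵀ.mulVec ω) - gradF + π)
    (hcs : ω ⬝ᵥ (G.mulVec f + α • g) = 0)
    (hnorm : Real.sqrt (∑ i, (π i) ^ 2) ≤ Real.sqrt (∑ i, (f i) ^ 2)) :
    f ⬝ᵥ gradF ≤ 0 := by
  have hgrad : gradF = π - Gᵀ *ᵥ ω - f := by rw [hstat]; abel
  have hfπ : f ⬝ᵥ π ≤ f ⬝ᵥ f := by
    have hff : f ⬝ᵥ f = ∑ i, f i ^ 2 := by simp only [dotProduct, sq]
    rw [hff]
    exact dotProduct_le_sum_sq_of_sum_sq_le ((Real.sqrt_le_sqrt_iff (by positivity)).1 hnorm)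
  have hGω := dotProduct_transpose_mulVec_nonneg_of_slackness hα.le hω hg hcs
  rw [hgrad, dotProduct_sub, dotProduct_sub]
  linarith
end
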